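/- For every Dyck path π of semilength n and every integer x with area(π) + bounce(π) ≤ x ≤ C(n,2), there exists a Dyck path τ of semilength n with area(τ) + bounce(τ) = x. -/

import Mathlib

/-- A Dyck path of semilength `n`, encoded as a list of steps
(`true` = north, `false` = east), staying weakly above the diagonal. -/
def IsDyck (n : ℕ) (w : List Bool) : Prop :=
  w.length = 2 * n ∧ w.count true = n ∧
    ∀ k, (w.take k).count false ≤ (w.take k).count true

/-- The area of a Dyck path: the number of whole unit cells between the
path and the diagonal (on each north step, the current number of east
steps is subtracted from the current number of north steps). -/
def area (w : List Bool) : ℕ :=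
  (w.foldl
    (fun (p : ℕ × ℕ × ℕ) s =>
      if s then (p.1 + (p.2.1 - p.2.2), p.2.1 + 1, p.2.2)
      else (p.1, p.2.1, p.2.2 + 1)) (0, 0, 0)).1

/-- `hgt w b` is the number of north steps of `w` preceding its `(b+1)`-st
east step, i.e. the height at which the bounce path heading north along
the line `x = b` meets an east step of `w`. -/
def hgt : List Bool → ℕ → ℕ
  | [], _ => 0
  | true :: w, b => hgt w b + 1
  | false :: _, 0 => 0
  | false :: w, b + 1 => hgt w b

/-- The `i`-th bounce point (a height on the diagonal) of a Dyck path. -/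
def bpt (w : List Bool) (i : ℕ) : ℕ := (hgt w)^[i] 0

/-- The bounce statistic of a Dyck path of semilength `n`:
`∑ (n - b_i)` over the successive bounce points `b_i`, `i ≥ 1`
(once the bounce path reaches `n` the terms vanish). -/
def bounce (n : ℕ) (w : List Bool) : ℕ :=
  ∑ i ∈ Finset.range n, (n - bpt w (i + 1))

/-- The Dyck path `N^{α₁}E^{α₁} ⋯ N^{α_ℓ}E^{α_ℓ}` of a composition `α`. -/
def pComp (α : List ℕ) : List Bool :=
  α.foldr (fun a acc => List.replicate a true ++ List.replicate a false ++ acc) []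


namespace Stmt8Aux

/-! ### foldl machinery for area -/

def stp : ℕ × ℕ × ℕ → Bool → ℕ × ℕ × ℕ := fun p s =>
  if s then (p.1 + (p.2.1 - p.2.2), p.2.1 + 1, p.2.2) else (p.1, p.2.1, p.2.2 + 1)

lemma area_def (w : List Bool) : area w = (w.foldl stp (0, 0, 0)).1 := rfl

lemma foldl_shift (w : List Bool) :
    ∀ c a b k, (w.foldl stp (c, a + k, b + k)).1 = (w.foldl stp (c, a, b)).1 := by
  induction w with
  | nil => intros; rfl
  | cons s w ih =>
    intro c a b k
    cases s
    · have : (b + k) + 1 = (b + 1) + k := by omega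
      simp only [List.foldl_cons, stp, if_neg Bool.false_ne_true, this]
      exact ih c a (b + 1) k
    · have h1 : (a + k) - (b + k) = a - b := by omega
      have h2 : (a + k) + 1 = (a + 1) + k := by omega
      simp only [List.foldl_cons, stp, if_pos rfl, if_true, h1, h2]
      exact ih (c + (a - b)) (a + 1) b k

lemma foldl_c (w : List Bool) :
    ∀ c a b, (w.foldl stp (c, a, b)).1 = c + (w.foldl stp (0, a, b)).1 := by
  induction w with
  | nil => intros; rfl
  | cons s w ih =>
    intro c a b
    cases s
    · simp only [List.foldl_cons, stp, if_neg Bool.false_ne_true]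
      exact ih c a (b + 1)
    · simp only [List.foldl_cons, stp, if_pos rfl, if_true]
      rw [ih (c + (a - b)) (a + 1) b, ih (0 + (a - b)) (a + 1) b]
      omega

lemma foldl_mono (w : List Bool) :
    ∀ c c' a a' b, c ≤ c' → a ≤ a' →
      (w.foldl stp (c, a, b)).1 ≤ (w.foldl stp (c', a', b)).1 := by
  induction w with
  | nil => intro _ _ _ _ _ h _; exact h
  | cons s w ih =>
    intro c c' a a' b hc ha
    cases s
    · simp only [List.foldl_cons, stp, if_neg Bool.false_ne_true]
      exact ih c c' a a' (b + 1) hc ha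
    · simp only [List.foldl_cons, stp, if_pos rfl, if_true]
      exact ih _ _ _ _ _ (by omega) (by omega)

lemma foldl_repT (k : ℕ) : ∀ c a,
    ((List.replicate k true).foldl stp (c, a, 0)) = (c + k * a + k.choose 2, a + k, 0) := by
  induction k with
  | zero => intro c a; simp
  | succ k ih =>
    intro c a
    simp only [List.replicate_succ, List.foldl_cons, stp, if_pos rfl, if_true]
    rw [ih]
    have h2 : (k + 1).choose 2 = k.choose 2 + k := by
      rw [Nat.choose_succ_succ]
      simp [Nat.choose_one_right]; omega
    have : a - 0 = a := by omega
    rw [this]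
    refine Prod.ext ?_ (Prod.ext ?_ rfl) <;> simp <;> [skip; omega]
    rw [h2]; ring

lemma foldl_repF (k : ℕ) : ∀ c a b,
    ((List.replicate k false).foldl stp (c, a, b)) = (c, a, b + k) := by
  induction k with
  | zero => intro c a b; simp
  | succ k ih =>
    intro c a b
    simp only [List.replicate_succ, List.foldl_cons, stp, if_neg Bool.false_ne_true]
    rw [ih]
    refine Prod.ext rfl (Prod.ext rfl ?_)
    simp; omega

end Stmt8Aux

namespace Stmt8Aux

/-! ### dropF and hgt -/

def dropF : ℕ → List Bool → List Bool
  | 0, w => w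
  | _ + 1, [] => []
  | k + 1, true :: w => true :: dropF (k + 1) w
  | k + 1, false :: w => dropF k w

@[simp] lemma dropF_nil (k : ℕ) : dropF k [] = [] := by cases k <;> rfl

@[simp] lemma dropF_zero (w : List Bool) : dropF 0 w = w := by rw [dropF]
@[simp] lemma dropF_true (k : ℕ) (w : List Bool) : dropF k (true :: w) = true :: dropF k w := by
  cases k
  · rw [dropF]; rw [dropF]
  · rfl
@[simp] lemma dropF_false (k : ℕ) (w : List Bool) : dropF (k + 1) (false :: w) = dropF k w := rfl

@[simp] lemma cT_T (w : List Bool) : List.count true (true :: w) = List.count true w + 1 := by simp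
@[simp] lemma cT_F (w : List Bool) : List.count true (false :: w) = List.count true w := by simp
@[simp] lemma cF_T (w : List Bool) : List.count false (true :: w) = List.count false w := by simp
@[simp] lemma cF_F (w : List Bool) : List.count false (false :: w) = List.count false w + 1 := by simp


lemma cnt_tf (w : List Bool) : w.count true + w.count false = w.length := by
  induction w with
  | nil => simp
  | cons a w ih => cases a <;> simp [List.count_cons] <;> omega

lemma count_true_dropF (w : List Bool) : ∀ k, (dropF k w).count true = w.count true := by
  induction w with
  | nil => simp
  | cons s w ih =>
    intro k
    cases k with
    | zero => rfl
    | succ k =>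
      cases s
      · show (dropF k w).count true = _
        rw [ih k]; simp [List.count_cons]
      · show (true :: dropF (k+1) w).count true = _
        simp [List.count_cons, ih (k+1)]

lemma count_false_dropF (w : List Bool) : ∀ k, k ≤ w.count false →
    (dropF k w).count false + k = w.count false := by
  induction w with
  | nil => simp
  | cons s w ih =>
    intro k hk
    cases k with
    | zero => simp
    | succ k =>
      cases s
      · show (dropF k w).count false + (k + 1) = _
        have hk' : k ≤ w.count false := by
          simp [List.count_cons] at hk; omega
        have := ih k hk'
        simp [List.count_cons]; omega
      · show (true :: dropF (k+1) w).count false + (k+1) = _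
        have hk' : k + 1 ≤ w.count false := by
          simpa [List.count_cons] using hk
        have := ih (k+1) hk'
        simp [List.count_cons]; omega

lemma length_dropF (w : List Bool) : ∀ k, k ≤ w.count false →
    (dropF k w).length + k = w.length := by
  intro k hk
  have h1 := cnt_tf (dropF k w)
  have h2 := cnt_tf w
  have h3 := count_true_dropF w k
  have h4 := count_false_dropF w k hk
  omega

lemma dropF_repF (k : ℕ) (w : List Bool) :
    dropF k (List.replicate k false ++ w) = w := by
  induction k with
  | zero => simp
  | succ k ih => simpa [List.replicate_succ] using ih

@[simp] lemma hgt_nil (b : ℕ) : hgt [] b = 0 := rfl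
@[simp] lemma hgt_true (w : List Bool) (b : ℕ) : hgt (true :: w) b = hgt w b + 1 := rfl
@[simp] lemma hgt_false_zero (w : List Bool) : hgt (false :: w) 0 = 0 := rfl
@[simp] lemma hgt_false_succ (w : List Bool) (b : ℕ) : hgt (false :: w) (b + 1) = hgt w b := rfl

lemma hgt_repT (k : ℕ) (w : List Bool) (b : ℕ) :
    hgt (List.replicate k true ++ w) b = k + hgt w b := by
  induction k with
  | zero => simp
  | succ k ih => simp [List.replicate_succ, ih]; omega

lemma hgt_dropF (w : List Bool) : ∀ k b, hgt (dropF k w) b = hgt w (b + k) := by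
  induction w with
  | nil => simp
  | cons s w ih =>
    intro k b
    cases k with
    | zero => rfl
    | succ k =>
      cases s
      · show hgt (dropF k w) b = hgt (false :: w) (b + (k + 1))
        rw [ih k b, show b + (k+1) = (b + k) + 1 from rfl, hgt_false_succ]
      · show hgt (true :: dropF (k+1) w) b = _
        rw [hgt_true, ih (k+1) b, hgt_true]

lemma hgt_full (w : List Bool) : ∀ b, w.count false ≤ b → hgt w b = w.count true := by
  induction w with
  | nil => simp
  | cons s w ih =>
    intro b hb
    cases s
    · cases b with
      | zero => simp at hb
      | succ b =>
        simp only [cF_F] at hb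
        rw [hgt_false_succ, ih b (by omega)]
        simp
    · simp only [cF_T] at hb
      rw [hgt_true, ih b hb]
      simp

lemma hgt_ge (w : List Bool) : ∀ s b,
    (∀ j, (w.take j).count false ≤ (w.take j).count true + s) →
    b < w.count false → b + 1 ≤ hgt w b + s := by
  induction w with
  | nil => intro s b _ hb; simp at hb
  | cons t w ih =>
    intro s b hpre hb
    cases t
    · have hs : 1 ≤ s := by
        have := hpre 1
        simpa using this
      cases b with
      | zero => omega
      | succ b =>
        have hpre' : ∀ j, (w.take j).count false ≤ (w.take j).count true + (s - 1) := by
          intro j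
          have := hpre (j + 1)
          simp [List.count_cons] at this
          omega
        have hb' : b < w.count false := by
          simp [List.count_cons] at hb; omega
        have := ih (s - 1) b hpre' hb'
        rw [hgt_false_succ]
        omega
    · have hpre' : ∀ j, (w.take j).count false ≤ (w.take j).count true + (s + 1) := by
        intro j
        have := hpre (j + 1)
        simp [List.count_cons] at this
        omega
      have hb' : b < w.count false := by
        simpa [List.count_cons] using hb
      have := ih (s + 1) b hpre' hb'
      rw [hgt_true]
      omega

lemma pre_drop (σ : List Bool) : ∀ s k, k ≤ s →
    (∀ j, (σ.take j).count false ≤ (σ.take j).count true + s) →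
    ∀ j, ((dropF k σ).take j).count false ≤ ((dropF k σ).take j).count true + (s - k) := by
  induction σ with
  | nil => intro s k _ _ j; simp
  | cons t σ ih =>
    intro s k hks hpre j
    cases t
    · cases k with
      | zero =>
        have := hpre j
        simpa using this
      | succ k =>
        have hs : 1 ≤ s := by have := hpre 1; simpa using this
        have hpre' : ∀ j, (σ.take j).count false ≤ (σ.take j).count true + (s - 1) := by
          intro j
          have := hpre (j + 1)
          simp [List.count_cons] at this
          omega
        have := ih (s - 1) k (by omega) hpre' j
        show ((dropF k σ).take j).count false ≤ ((dropF k σ).take j).count true + (s - (k + 1))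
        omega
    · rw [dropF_true]
      cases j with
      | zero => simp
      | succ j =>
        have hpre' : ∀ j, (σ.take j).count false ≤ (σ.take j).count true + (s + 1) := by
          intro j
          have := hpre (j + 1)
          simp [List.count_cons] at this
          omega
        have := ih (s + 1) k (by omega) hpre' j
        simp [List.count_cons]
        omega

end Stmt8Aux

namespace Stmt8Aux

lemma bpt_zero (w : List Bool) : bpt w 0 = 0 := rfl

lemma bpt_succ (w : List Bool) (i : ℕ) : bpt w (i + 1) = hgt w (bpt w i) :=
  Function.iterate_succ_apply' (hgt w) i 0

lemma count_false_of_dyck {n : ℕ} {w : List Bool} (h : IsDyck n w) :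
    w.count false = n := by
  have := cnt_tf w
  have h1 := h.1
  have h2 := h.2.1
  omega

lemma bpt_ge {m : ℕ} {w : List Bool} (h : IsDyck m w) : ∀ i, min i m ≤ bpt w i := by
  intro i
  induction i with
  | zero => simp [bpt_zero]
  | succ i ih =>
    rw [bpt_succ]
    by_cases hc : m ≤ bpt w i
    · rw [hgt_full w _ (by rw [count_false_of_dyck h]; exact hc), h.2.1]
      omega
    · push_neg at hc
      have hlt : bpt w i < w.count false := by rw [count_false_of_dyck h]; exact hc
      have hge := hgt_ge w 0 (bpt w i) (by intro j; simpa using h.2.2 j) hlt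
      omega

lemma bpt_chain (k : ℕ) (σ : List Bool) (hσ : hgt σ 0 = 0) :
    ∀ i, bpt (List.replicate k true ++ σ) (i + 1) = k + bpt (dropF k σ) i := by
  intro i
  induction i with
  | zero => rw [bpt_succ, bpt_zero, bpt_zero, hgt_repT, hσ]
  | succ i ih =>
    rw [bpt_succ, ih, bpt_succ, hgt_repT, Nat.add_comm k (bpt (dropF k σ) i), ← hgt_dropF]

lemma bounce_decomp (k m : ℕ) (σ : List Bool) (hk : 1 ≤ k) (hσ : hgt σ 0 = 0)
    (hd : IsDyck m (dropF k σ)) :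
    bounce (k + m) (List.replicate k true ++ σ) = m + bounce m (dropF k σ) := by
  have hterm : ∀ i, (k + m) - bpt (List.replicate k true ++ σ) (i + 1) = m - bpt (dropF k σ) i := by
    intro i
    rw [bpt_chain k σ hσ i]
    omega
  unfold bounce
  rw [Finset.sum_congr rfl (fun i _ => hterm i)]
  have hkm : k + m = ((k - 1) + m) + 1 := by omega
  rw [hkm, Finset.sum_range_succ']
  have hsub : ∑ i ∈ Finset.range ((k - 1) + m), (m - bpt (dropF k σ) (i + 1))
      = ∑ i ∈ Finset.range m, (m - bpt (dropF k σ) (i + 1)) := by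
    symm
    apply Finset.sum_subset
    · exact Finset.range_subset_range.mpr (by omega)
    · intro x hx hnx
      have hxm : m ≤ x := by
        simp only [Finset.mem_range] at hnx
        omega
      have := bpt_ge hd (x + 1)
      omega
  rw [hsub, bpt_zero]
  omega

/-! ### Dyck structural lemmas -/

lemma dyck_drop {n k m : ℕ} {σ : List Bool}
    (h : IsDyck n (List.replicate k true ++ σ)) (hm : k + m = n) :
    IsDyck m (dropF k σ) := by
  obtain ⟨hlen, hct, hpre⟩ := h
  have hlen' : k + σ.length = 2 * n := by simpa using hlen
  have hct' : k + σ.count true = n := by simpa using hct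
  have hcf : σ.count false = n := by
    have := cnt_tf σ; omega
  have hkn : k ≤ n := by omega
  refine ⟨?_, ?_, ?_⟩
  · have := length_dropF σ k (by omega)
    omega
  · rw [count_true_dropF σ k]; omega
  · have hpre' : ∀ j, (σ.take j).count false ≤ (σ.take j).count true + k := by
      intro j
      have := hpre (k + j)
      rw [List.take_append] at this
      simp only [List.take_replicate, List.length_replicate] at this
      have hmin : min (k + j) k = k := by omega
      rw [hmin] at this
      have hd : k + j - k = j := by omega
      rw [hd] at this
      simp [List.count_append, List.count_replicate] at this
      omega
    intro j
    have := pre_drop σ k k le_rfl hpre' j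
    simpa using this
  
lemma dyck_append_block {m : ℕ} {w : List Bool} (k : ℕ) (h : IsDyck m w) :
    IsDyck (k + m) (List.replicate k true ++ (List.replicate k false ++ w)) := by
  obtain ⟨hlen, hct, hpre⟩ := h
  refine ⟨by simp [hlen]; omega, by simp [List.count_replicate, hct], ?_⟩
  intro j
  rw [List.take_append, List.take_append]
  simp only [List.take_replicate, List.length_replicate, List.count_append,
    List.count_replicate]
  have hp := hpre (j - k - k)
  norm_num
  omega

lemma dyck_nil : IsDyck 0 [] := ⟨rfl, rfl, by intro k; simp⟩

end Stmt8Aux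

namespace Stmt8Aux

def Comp (n : ℕ) (α : List ℕ) : Prop := α.sum = n ∧ ∀ a ∈ α, 1 ≤ a

def vl (n : ℕ) (w : List Bool) : ℕ := area w + bounce n w

lemma choose2_succ (n : ℕ) : (n + 1).choose 2 = n.choose 2 + n := by
  rw [Nat.choose_succ_succ]
  simp [Nat.choose_one_right]
  omega

lemma choose2_add (k m : ℕ) : (k + m).choose 2 = k.choose 2 + m.choose 2 + k * m := by
  induction m with
  | zero => simp
  | succ m ih =>
    have h1 : k + (m + 1) = (k + m) + 1 := by omega
    rw [h1, choose2_succ, ih, choose2_succ, Nat.mul_succ]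
    omega

lemma pComp_cons (k : ℕ) (β : List ℕ) :
    pComp (k :: β) = List.replicate k true ++ (List.replicate k false ++ pComp β) := by simp [pComp]

@[simp] lemma pComp_nil : pComp [] = [] := by simp [pComp]

lemma pComp_isDyck {n : ℕ} {α : List ℕ} (h : Comp n α) : IsDyck n (pComp α) := by
  induction α generalizing n with
  | nil =>
    have : n = 0 := by have := h.1; simpa using this.symm
    subst this
    exact dyck_nil
  | cons k β ih =>
    have hβ : Comp (β.sum) β := ⟨rfl, fun a ha => h.2 a (List.mem_cons_of_mem _ ha)⟩
    have hn : n = k + β.sum := by have := h.1; simp at this; omega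
    subst hn
    rw [pComp_cons]
    exact dyck_append_block k (ih hβ)

lemma area_block (k : ℕ) (w : List Bool) :
    area (List.replicate k true ++ (List.replicate k false ++ w)) = k.choose 2 + area w := by
  rw [area_def, List.foldl_append, List.foldl_append, foldl_repT]
  have h1 : (0 : ℕ) + k * 0 + k.choose 2 = k.choose 2 := by omega
  have h2 : (0 : ℕ) + k = k := by omega
  rw [h1, h2, foldl_repF, foldl_c w (k.choose 2) k (0 + k)]
  have h3 : (w.foldl stp (0, k, 0 + k)).1 = (w.foldl stp (0, 0, 0)).1 := by
    have := foldl_shift w 0 0 0 k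
    simpa using this
  rw [h3, ← area_def]

lemma foldl_drop (σ : List Bool) : ∀ c a b k,
    ((dropF k σ).foldl stp (c, a, b)).1 ≤ (σ.foldl stp (c, a + k, b)).1 := by
  induction σ with
  | nil => intro c a b k; simp
  | cons s σ ih =>
    intro c a b k
    cases s
    · cases k with
      | zero =>
        simp only [dropF_zero]
        exact le_refl _
      | succ k =>
        rw [dropF_false]
        simp only [List.foldl_cons, stp, if_neg Bool.false_ne_true]
        have heq : (σ.foldl stp (c, a + k, b)).1 = (σ.foldl stp (c, a + (k + 1), b + 1)).1 := by
          rw [show a + (k + 1) = (a + k) + 1 from by omega]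
          exact (foldl_shift σ c (a + k) b 1).symm
        exact le_trans (ih c a b k) (le_of_eq heq)
    · rw [dropF_true]
      simp only [List.foldl_cons, stp, if_pos rfl, if_true]
      refine le_trans (ih (c + (a - b)) (a + 1) b k) ?_
      have harg : a + 1 + k = a + k + 1 := by omega
      rw [harg]
      exact foldl_mono σ _ _ _ _ _ (by omega) (by omega)

lemma area_ge (k : ℕ) (σ : List Bool) :
    k.choose 2 + area (dropF k σ) ≤ area (List.replicate k true ++ σ) := by
  rw [area_def (List.replicate k true ++ σ), List.foldl_append, foldl_repT]
  have h1 : (0 : ℕ) + k * 0 + k.choose 2 = k.choose 2 := by omega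
  have h2 : (0 : ℕ) + k = k := by omega
  rw [h1, h2, foldl_c σ (k.choose 2) k 0]
  have h4 := foldl_drop σ 0 0 0 k
  simp only [Nat.zero_add] at h4
  rw [area_def]
  omega

lemma vl_nil : vl 0 (pComp []) = 0 := by
  simp [vl, bounce, area]

lemma vl_cons {m : ℕ} (k : ℕ) {β : List ℕ} (hk : 1 ≤ k) (hβ : Comp m β) :
    vl (k + m) (pComp (k :: β)) = k.choose 2 + m + vl m (pComp β) := by
  have hσ : hgt (List.replicate k false ++ pComp β) 0 = 0 := by
    cases k with
    | zero => omega
    | succ k => rw [List.replicate_succ]; exact hgt_false_zero _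
  have hdrop : dropF k (List.replicate k false ++ pComp β) = pComp β := dropF_repF k _
  have hd : IsDyck m (dropF k (List.replicate k false ++ pComp β)) := by
    rw [hdrop]; exact pComp_isDyck hβ
  have hb := bounce_decomp k m (List.replicate k false ++ pComp β) hk hσ hd
  rw [hdrop] at hb
  rw [vl, vl, pComp_cons, area_block, hb]
  omega

end Stmt8Aux

namespace Stmt8Aux

lemma vl_one : vl 1 (pComp [1]) = 0 := by
  have h := vl_cons (m := 0) (β := []) 1 le_rfl ⟨rfl, fun a ha => absurd ha List.not_mem_nil⟩
  rw [vl_nil] at h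
  simpa using h

lemma part1 : ∀ n v, v ≤ n.choose 2 →
    (∃ α, Comp n α ∧ vl n (pComp α) ≤ v) →
    ∃ α, Comp n α ∧ vl n (pComp α) = v := by
  intro n
  induction n using Nat.strong_induction_on with
  | _ n IH =>
    rintro v hv ⟨α, hα, hle⟩
    have inner : ∀ k m β, 1 ≤ k → k + m = n → Comp m β →
        k.choose 2 + m + vl m (pComp β) ≤ v →
        ∃ α', Comp n α' ∧ vl n (pComp α') = v := by
      intro k
      induction k with
      | zero => intro m β hk; exact (Nat.not_succ_le_zero 0 hk).elim
      | succ k ik =>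
        intro m β hk hkm hβ hbound
        by_cases hc : v ≤ (k + 1).choose 2 + m + m.choose 2
        · have hmn : m < n := by omega
          obtain ⟨β', hβ', hvalβ'⟩ := IH m hmn (v - ((k + 1).choose 2 + m))
            (by omega) ⟨β, hβ, by omega⟩
          refine ⟨(k + 1) :: β', ⟨by simp [hβ'.1]; omega, ?_⟩, ?_⟩
          · intro a ha
            rcases List.mem_cons.mp ha with h | h
            · omega
            · exact hβ'.2 a h
          · rw [← hkm, vl_cons (k + 1) (by omega) hβ', hvalβ']
            omega
        · push_neg at hc
          cases k with
          | zero =>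
            exfalso
            have h1 : n = 1 + m := by omega
            have h2 := choose2_add 1 m
            have h3 : (1 : ℕ).choose 2 = 0 := rfl
            rw [h1] at hv
            omega
          | succ k' =>
            by_cases hm : m = 0
            · subst hm
              have hcomp : Comp 1 [1] := ⟨by simp, fun a ha => by simp at ha; omega⟩
              apply ik 1 [1] (by omega) (by omega) hcomp
              have hc2 := choose2_succ (k' + 1)
              have h0 : (0 : ℕ).choose 2 = 0 := rfl
              rw [vl_one]
              omega
            · have hcomp : Comp (m + 1) [m, 1] :=
                ⟨by simp, fun a ha => by simp at ha; omega⟩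
              apply ik (m + 1) [m, 1] (by omega) (by omega) hcomp
              have hv2 : vl (m + 1) (pComp [m, 1]) = m.choose 2 + 1 := by
                have h := vl_cons (m := 1) m (by omega)
                  (⟨by simp, fun a ha => by simp at ha; omega⟩ : Comp 1 [1])
                rw [vl_one] at h
                simpa using h
              have hc2 := choose2_succ (k' + 1)
              rw [hv2]
              omega
    rcases α with _ | ⟨k₀, β₀⟩
    · have hn : n = 0 := by simpa using hα.1.symm
      subst hn
      refine ⟨[], hα, ?_⟩
      rw [vl_nil]
      have h0 : (0 : ℕ).choose 2 = 0 := rfl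
      omega
    · have hk₀ : 1 ≤ k₀ := hα.2 k₀ List.mem_cons_self
      have hβ₀ : Comp β₀.sum β₀ := ⟨rfl, fun a ha => hα.2 a (List.mem_cons_of_mem _ ha)⟩
      have hn : k₀ + β₀.sum = n := by
        have := hα.1; simp at this; omega
      have hle' : k₀.choose 2 + β₀.sum + vl β₀.sum (pComp β₀) ≤ v := by
        rw [← hn, vl_cons k₀ hk₀ hβ₀] at hle
        exact hle
      exact inner k₀ β₀.sum β₀ hk₀ hn hβ₀ hle'

lemma exists_decomp (π : List Bool) :
    ∃ k σ, π = List.replicate k true ++ σ ∧ (σ = [] ∨ ∃ σ', σ = false :: σ') := by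
  induction π with
  | nil => exact ⟨0, [], rfl, Or.inl rfl⟩
  | cons s π ih =>
    cases s
    · exact ⟨0, false :: π, rfl, Or.inr ⟨π, rfl⟩⟩
    · obtain ⟨k, σ, heq, hσ⟩ := ih
      exact ⟨k + 1, σ, by rw [List.replicate_succ, heq]; rfl, hσ⟩

lemma part3 : ∀ n π, IsDyck n π → ∃ α, Comp n α ∧ vl n (pComp α) ≤ vl n π := by
  intro n
  induction n using Nat.strong_induction_on with
  | _ n IH =>
    intro π hπ
    by_cases hn : n = 0
    · subst hn
      exact ⟨[], ⟨rfl, by simp⟩, by rw [vl_nil]; omega⟩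
    · obtain ⟨k, σ, heq, hcase⟩ := exists_decomp π
      subst heq
      have hcf : σ.count false = n := by
        have := count_false_of_dyck hπ
        simpa [List.count_append, List.count_replicate] using this
      rcases hcase with hnil | ⟨σ', hσ'⟩
      · exfalso; rw [hnil] at hcf; simp at hcf; exact hn hcf.symm
      have hσ0 : hgt σ 0 = 0 := by rw [hσ']; exact hgt_false_zero σ'
      have hk1 : 1 ≤ k := by
        by_contra h
        have hk0 : k = 0 := by omega
        have := hπ.2.2 1
        rw [hk0, hσ'] at this
        simp at this
      have hkn : k ≤ n := by
        have h := hπ.2.1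
        simp [List.count_append, List.count_replicate] at h
        omega
      have hkm : k + (n - k) = n := by omega
      have hd : IsDyck (n - k) (dropF k σ) := dyck_drop hπ hkm
      obtain ⟨α', hα', hle'⟩ := IH (n - k) (by omega) (dropF k σ) hd
      refine ⟨k :: α', ⟨by simp [hα'.1]; omega, ?_⟩, ?_⟩
      · intro a ha
        rcases List.mem_cons.mp ha with h | h
        · omega
        · exact hα'.2 a h
      · have hvc : vl n (pComp (k :: α')) = k.choose 2 + (n - k) + vl (n - k) (pComp α') := by
          have h := vl_cons k hk1 hα'
          rw [hkm] at h
          exact h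
        have harea := area_ge k σ
        have hb' : bounce n (List.replicate k true ++ σ) = (n - k) + bounce (n - k) (dropF k σ) := by
          have h := bounce_decomp k (n - k) σ hk1 hσ0 hd
          rw [hkm] at h
          exact h
        have hw : vl (n - k) (dropF k σ) = area (dropF k σ) + bounce (n - k) (dropF k σ) := rfl
        have hvp : vl n (List.replicate k true ++ σ)
            = area (List.replicate k true ++ σ) + bounce n (List.replicate k true ++ σ) := rfl
        rw [hw] at hle'
        rw [hvc, hvp, hb']
        omega

end Stmt8Aux

theorem stmt8 (n : ℕ) (π : List Bool) (hπ : IsDyck n π) (x : ℕ)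
    (hx1 : area π + bounce n π ≤ x) (hx2 : x ≤ n.choose 2) :
    ∃ τ : List Bool, IsDyck n τ ∧ area τ + bounce n τ = x := by
  obtain ⟨α₀, h0, hle0⟩ := Stmt8Aux.part3 n π hπ
  obtain ⟨α, hα, hval⟩ := Stmt8Aux.part1 n x hx2 ⟨α₀, h0, le_trans hle0 hx1⟩
  exact ⟨pComp α, Stmt8Aux.pComp_isDyck hα, hval⟩
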